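/- Let f and g be probability density functions on ℝ that are continuous and strictly positive, and suppose the likelihood ratio x ↦ f(x)/g(x) is monotonically increasing. Then the corresponding cumulative distribution functions F(x) = ∫_{-∞}^x f and G(x) = ∫_{-∞}^x g satisfy F(x) ≤ G(x) for all x ∈ ℝ (first-order stochastic dominance). -/
import Mathlib


open MeasureTheory

theorem stmt_0 (f g : ℝ → ℝ)
    (hfi : Integrable f) (hgi : Integrable g)
    (hfc : Continuous f) (hgc : Continuous g)
    (hfp : ∀ x, 0 < f x) (hgp : ∀ x, 0 < g x)
    (hf1 : ∫ x, f x = 1) (hg1 : ∫ x, g x = 1)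
    (hmlr : ∀ x y, x ≤ y → f x / g x ≤ f y / g y) :
    ∀ x : ℝ, (∫ t in Set.Iic x, f t) ≤ ∫ t in Set.Iic x, g t := by
  intro x
  set r := f x / g x with hr_def
  have hr : 0 < r := div_pos (hfp x) (hgp x)
  have hrg : Integrable (fun t => r * g t) := hgi.const_mul r
  -- pointwise bounds
  have h1 : ∀ t ∈ Set.Iic x, f t ≤ r * g t := by
    intro t ht
    have := hmlr t x ht
    rw [div_le_div_iff₀ (hgp t) (hgp x)] at this
    rw [hr_def, div_mul_eq_mul_div, le_div_iff₀ (hgp x)]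
    linarith
  have h2 : ∀ t ∈ Set.Ioi x, r * g t ≤ f t := by
    intro t ht
    have := hmlr x t (le_of_lt ht)
    rw [div_le_div_iff₀ (hgp x) (hgp t)] at this
    rw [hr_def, div_mul_eq_mul_div, div_le_iff₀ (hgp x)]
    linarith
  have hF1 : (∫ t in Set.Iic x, f t) + ∫ t in Set.Ioi x, f t = 1 := by
    rw [intervalIntegral.integral_Iic_add_Ioi hfi.integrableOn hfi.integrableOn, hf1]
  have hG1 : (∫ t in Set.Iic x, g t) + ∫ t in Set.Ioi x, g t = 1 := by
    rw [intervalIntegral.integral_Iic_add_Ioi hgi.integrableOn hgi.integrableOn, hg1]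
  have hGpos : 0 ≤ ∫ t in Set.Iic x, g t :=
    setIntegral_nonneg measurableSet_Iic fun t _ => (hgp t).le
  have hGpos' : 0 ≤ ∫ t in Set.Ioi x, g t :=
    setIntegral_nonneg measurableSet_Ioi fun t _ => (hgp t).le
  have hA : (∫ t in Set.Iic x, f t) ≤ r * ∫ t in Set.Iic x, g t := by
    calc (∫ t in Set.Iic x, f t) ≤ ∫ t in Set.Iic x, r * g t :=
          setIntegral_mono_on hfi.integrableOn hrg.integrableOn measurableSet_Iic h1
      _ = r * ∫ t in Set.Iic x, g t := integral_const_mul r g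
  have hB : r * (∫ t in Set.Ioi x, g t) ≤ ∫ t in Set.Ioi x, f t := by
    calc r * (∫ t in Set.Ioi x, g t) = ∫ t in Set.Ioi x, r * g t :=
          (integral_const_mul r g).symm
      _ ≤ ∫ t in Set.Ioi x, f t :=
          setIntegral_mono_on hrg.integrableOn hfi.integrableOn measurableSet_Ioi h2
  rcases le_or_gt r 1 with h | h
  · nlinarith
  · nlinarith
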